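/- Lemma (existence of an unlabeled I-link). Let d ≥ 3 and let s be a syndrome on the toric lattice T_d whose distinct unsatisfied checks are pairwise at distance at least 4 from each other. Let C be a configuration on a decoding tree T_{i,q} for s, and let u — v_c be a maximal proper labeled link of C whose endpoint v_c (a vertex associated with an unsatisfied check c) is at distance at least 5 from the bottom of the tree. Then there exists an unlabeled I-link v_c — v'_c whose upper endpoint is v_c and whose lower endpoint v'_c is also a vertex associated with the same check c. -/

import Mathlib

namespace ToricMS

/-- Checks of the toric lattice: vertices of the `d × d` torus grid. -/
abbrev V (d : ℕ) : Type := ZMod d × ZMod d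

/-- The toric lattice `T_d`: two checks are adjacent iff their difference is
`(±1, 0)` or `(0, ±1)` mod `d` (for `d ≥ 3` the inequality clause is automatic). -/
def Toric (d : ℕ) : SimpleGraph (V d) where
  Adj v w := v ≠ w ∧
    (v - w = (1, 0) ∨ v - w = (-1, 0) ∨ v - w = (0, 1) ∨ v - w = (0, -1))
  symm := ⟨by
    rintro v w ⟨hne, h⟩
    refine ⟨hne.symm, ?_⟩
    have hswap : w - v = -(v - w) := by ring
    rcases h with h | h | h | h <;> rw [hswap, h] <;> simp [Prod.ext_iff]⟩
  loopless := ⟨fun v h => h.1 rfl⟩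

/-- Weight of an error: the number of qubits (edges) in error. -/
noncomputable def wt {d : ℕ} (e : (Toric d).edgeSet → ZMod 2) : ℕ :=
  Nat.card {q : (Toric d).edgeSet // e q = 1}

/-- Syndrome of an error: mod-2 sum of the error over the qubits incident to each check. -/
noncomputable def synd {d : ℕ} (e : (Toric d).edgeSet → ZMod 2) : V d → ZMod 2 :=
  fun c => (Nat.card {q : (Toric d).edgeSet // e q = 1 ∧ c ∈ (q : Sym2 (V d))} : ZMod 2)

/-- A degenerate error: some different error of no larger weight has the same syndrome. -/
def Degenerate {d : ℕ} (e : (Toric d).edgeSet → ZMod 2) : Prop :=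
  ∃ e' : (Toric d).edgeSet → ZMod 2, e' ≠ e ∧ wt e' ≤ wt e ∧ synd e' = synd e

/-- The fake syndrome `s^c` having `c` as its only unsatisfied check. -/
def fakeS (d : ℕ) (c : V d) : V d → ZMod 2 := fun c' => if c' = c then 1 else 0

/-- The error `ε⁴` consisting of 4 consecutive collinear (horizontal) qubits. -/
def eps4 (d : ℕ) : (Toric d).edgeSet → ZMod 2 := fun q =>
  if q.val = s((((0 : ZMod d), (0 : ZMod d)) : V d), ((1, 0) : V d))
      ∨ q.val = s((((1 : ZMod d), (0 : ZMod d)) : V d), ((2, 0) : V d))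
      ∨ q.val = s((((2 : ZMod d), (0 : ZMod d)) : V d), ((3, 0) : V d))
      ∨ q.val = s((((3 : ZMod d), (0 : ZMod d)) : V d), ((4, 0) : V d))
  then 1 else 0

/-- Walk without return (wwr) in `T_d`, as its list of visited checks. -/
def IsWWR (d : ℕ) (l : List (V d)) : Prop :=
  l.Chain' (Toric d).Adj ∧ ∀ j : ℕ, j + 2 < l.length → l[j]? ≠ l[j + 2]?

/-- A walk starting with the root edge `e_q = {a, b}` (either orientation allowed). -/
def StartsQ (d : ℕ) (a b : V d) (l : List (V d)) : Prop :=
  l.take 2 = [a, b] ∨ l.take 2 = [b, a]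

/-- Vertices of the decoding tree `T_{i,q}` (`q` the edge `{a,b}`): wwrs of
length `1, …, i` starting with `e_q`, encoded by their check lists. -/
def IsTreeVertex (d : ℕ) (a b : V d) (i : ℕ) (l : List (V d)) : Prop :=
  IsWWR d l ∧ StartsQ d a b l ∧ 2 ≤ l.length ∧ l.length ≤ i + 1

/-- Edges of the decoding tree `T_{i,q}`: wwrs of length `1, …, i+1` starting with
`e_q` (an edge is identified with the wwr ending with it), where the root edge is
canonically represented by `[a, b]`. -/
def IsTreeEdge (d : ℕ) (a b : V d) (i : ℕ) (l : List (V d)) : Prop :=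
  IsWWR d l ∧ StartsQ d a b l ∧ 2 ≤ l.length ∧ l.length ≤ i + 2 ∧
    (l.length = 2 → l = [a, b])

/-- Dangling edges: tree edges at maximal depth, with a single endpoint in the tree. -/
def IsDangling (d : ℕ) (a b : V d) (i : ℕ) (l : List (V d)) : Prop :=
  IsTreeEdge d a b i l ∧ l.length = i + 2

/-- The check of `T_d` associated with a tree vertex. -/
def vcheck {d : ℕ} (l : List (V d)) : V d := l.getLastD 0

/-- Incidence between a tree vertex and a tree edge. -/
def IncidentVE {d : ℕ} (lv le : List (V d)) : Prop :=
  lv = le ∨ lv = le.dropLast ∨ (le.length = 2 ∧ lv = le.reverse)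

/-- A configuration on the decoding tree for syndrome `s`: an edge labelling such
that around every tree vertex, the mod-2 sum of the labels of the incident edges
equals the syndrome value of the associated check. -/
def IsConfig (d : ℕ) (a b : V d) (i : ℕ) (s : V d → ZMod 2)
    (C : List (V d) → ZMod 2) : Prop :=
  ∀ lv, IsTreeVertex d a b i lv →
    (Nat.card {le : List (V d) //
        IsTreeEdge d a b i le ∧ IncidentVE lv le ∧ C le = 1} : ZMod 2) = s (vcheck lv)

/-- Weight of a configuration: its number of labeled tree edges. -/
noncomputable def cweight (d : ℕ) (a b : V d) (i : ℕ) (C : List (V d) → ZMod 2) : ℕ :=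
  Nat.card {le : List (V d) // IsTreeEdge d a b i le ∧ C le = 1}

/-- Minimal weight of a configuration whose root edge has label `r`. -/
noncomputable def minW (d : ℕ) (a b : V d) (i : ℕ) (s : V d → ZMod 2) (r : ZMod 2) : ℕ :=
  sInf {n : ℕ | ∃ C : List (V d) → ZMod 2,
    IsConfig d a b i s C ∧ C [a, b] = r ∧ cweight d a b i C = n}

/-- A posteriori value of the (oriented) qubit `(a,b)` at iteration `i` computed by
min-sum (Wiberg): minimal root-labeled weight minus minimal root-unlabeled weight. -/
noncomputable def APPo (d : ℕ) (s : V d → ZMod 2) (i : ℕ) (a b : V d) : ℤ :=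
  (minW d a b i s 1 : ℤ) - (minW d a b i s 0 : ℤ)

/-- A posteriori value of a qubit (an unordered edge) at iteration `i`. -/
noncomputable def APP (d : ℕ) (s : V d → ZMod 2) (i : ℕ) : Sym2 (V d) → ℤ :=
  Sym2.lift ⟨fun a b => min (APPo d s i a b) (APPo d s i b a), fun _ _ => min_comm _ _⟩

/-- The MS hard-decision estimate at iteration `i`. -/
noncomputable def hatE (d : ℕ) (s : V d → ZMod 2) (i : ℕ) : (Toric d).edgeSet → ZMod 2 :=
  fun q => if APP d s i q.val < 0 then 1 else 0

/-- `s` is decoded by MS in `k` iterations: the estimate satisfies the syndrome at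
iteration `k` and not before. -/
def DecodedIn (d : ℕ) (s : V d → ZMod 2) (k : ℕ) : Prop :=
  1 ≤ k ∧ synd (hatE d s k) = s ∧ ∀ j, 1 ≤ j → j < k → synd (hatE d s j) ≠ s

/-- The error `e` is correctly decoded by MS. -/
def CorrectlyDecoded {d : ℕ} (e : (Toric d).edgeSet → ZMod 2) : Prop :=
  ∃ k, DecodedIn d (synd e) k ∧ hatE d (synd e) k = e

/-- Length of the longest common prefix of two lists. -/
def cpl {d : ℕ} : List (V d) → List (V d) → ℕ
  | x :: xs, y :: ys => if x = y then cpl xs ys + 1 else 0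
  | _, _ => 0

/-- Distance (number of edges of the connecting path) between two tree vertices. -/
def treeDist {d : ℕ} (lu lv : List (V d)) : ℕ :=
  if lu.take 2 = lv.take 2 then lu.length + lv.length - 2 * cpl lu lv
  else lu.length + lv.length - 3

/-- Strip a dangling edge down to its unique endpoint vertex. -/
def stripD {d : ℕ} (i : ℕ) (l : List (V d)) : List (V d) :=
  if l.length = i + 2 then l.dropLast else l

/-- `le` is an edge on the (unique) tree path between tree vertices `lu` and `lv`. -/
def OnPathVV {d : ℕ} (lu lv le : List (V d)) : Prop :=
  if lu.take 2 = lv.take 2 then (le <+: lu ∨ le <+: lv) ∧ cpl lu lv < le.length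
  else ((le <+: lu ∨ le <+: lv) ∧ 3 ≤ le.length) ∨ le.length = 2

/-- `lw` is a vertex on the (unique) tree path between tree vertices `lu` and `lv`. -/
def OnPathVertexVV {d : ℕ} (lu lv lw : List (V d)) : Prop :=
  if lu.take 2 = lv.take 2 then (lw <+: lu ∨ lw <+: lv) ∧ cpl lu lv ≤ lw.length
  else (lw <+: lu ∨ lw <+: lv) ∧ 2 ≤ lw.length

/-- A link of the decoding tree `T_{i,q}` for syndrome `s`: a path in the tree
whose vertex endpoints (if any) are associated with unsatisfied checks; an
endpoint is either a tree vertex or a dangling edge. -/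
structure Link (d : ℕ) (a b : V d) (i : ℕ) (s : V d → ZMod 2) where
  endA : List (V d)
  endB : List (V d)
  hA : IsTreeVertex d a b i endA ∨ IsDangling d a b i endA
  hB : IsTreeVertex d a b i endB ∨ IsDangling d a b i endB
  hAu : IsTreeVertex d a b i endA → s (vcheck endA) = 1
  hBu : IsTreeVertex d a b i endB → s (vcheck endB) = 1
  hne : endA ≠ endB

variable {d : ℕ} {a b : V d} {i : ℕ} {s : V d → ZMod 2}

/-- The tree edges lying on a link. -/
def Link.on (L : Link d a b i s) (le : List (V d)) : Prop :=
  OnPathVV (stripD i L.endA) (stripD i L.endB) le ∨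
    (L.endA.length = i + 2 ∧ le = L.endA) ∨ (L.endB.length = i + 2 ∧ le = L.endB)

/-- The length (number of edges) of a link. -/
def Link.len (L : Link d a b i s) : ℕ :=
  treeDist (stripD i L.endA) (stripD i L.endB) +
    (if L.endA.length = i + 2 then 1 else 0) + (if L.endB.length = i + 2 then 1 else 0)

/-- A proper link: both endpoints are (unsatisfied) tree vertices. -/
def Link.Proper (L : Link d a b i s) : Prop :=
  IsTreeVertex d a b i L.endA ∧ IsTreeVertex d a b i L.endB

/-- A labeled link (w.r.t. a configuration `C`): all its edges are labeled. -/
def Link.IsLabeled (L : Link d a b i s) (C : List (V d) → ZMod 2) : Prop :=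
  ∀ le, IsTreeEdge d a b i le → L.on le → C le = 1

/-- A maximal labeled link: it cannot be extended into a longer labeled link. -/
def Link.IsMaxLabeled (L : Link d a b i s) (C : List (V d) → ZMod 2) : Prop :=
  L.IsLabeled C ∧
    ∀ L' : Link d a b i s, L'.IsLabeled C → (∀ le, L.on le → L'.on le) → L'.len ≤ L.len

/-- An `I`-link: a proper link of length 4 not containing the root, descending
four levels of the tree. -/
def Link.IsI (L : Link d a b i s) : Prop :=
  L.Proper ∧ L.len = 4 ∧ ¬ L.on [a, b] ∧
    (L.endA.length + 4 = L.endB.length ∨ L.endB.length + 4 = L.endA.length)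

/-- A `Γ`-link: a proper link of length 4 not containing the root, going up one
level then down three. -/
def Link.IsGamma (L : Link d a b i s) : Prop :=
  L.Proper ∧ L.len = 4 ∧ ¬ L.on [a, b] ∧
    (L.endA.length + 2 = L.endB.length ∨ L.endB.length + 2 = L.endA.length)

/-- A `Λ`-link: a proper link of length 4 not containing the root, going up two
levels then down two (its endpoints are at the same depth). -/
def Link.IsLambda (L : Link d a b i s) : Prop :=
  L.Proper ∧ L.len = 4 ∧ ¬ L.on [a, b] ∧ L.endA.length = L.endB.length

/-- Distance of a tree vertex to the bottom: minimal length of a path starting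
at that vertex and ending with a dangling edge. -/
noncomputable def distToBottom (d : ℕ) (a b : V d) (i : ℕ) (lv : List (V d)) : ℕ :=
  sInf {n : ℕ | ∃ le, IsDangling d a b i le ∧ n = treeDist lv le.dropLast + 1}

/-- A walk in the decoding tree: a sequence of tree edges `es` together with the
sequence `vs` of tree vertices through which consecutive edges are traversed. -/
structure TreeWalk (d : ℕ) (a b : V d) (i : ℕ) where
  es : List (List (V d))
  vs : List (List (V d))
  hlen : vs.length + 1 = es.length
  hes : ∀ le ∈ es, IsTreeEdge d a b i le
  hvs : ∀ lv ∈ vs, IsTreeVertex d a b i lv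
  hinc : ∀ (j : ℕ) (hj : j < vs.length),
    IncidentVE (vs[j]'hj) (es[j]'(by omega)) ∧ IncidentVE (vs[j]'hj) (es[j + 1]'(by omega))
  htrav : ∀ (j : ℕ) (hj : j + 1 < vs.length), vs[j]'(by omega) ≠ vs[j + 1]'hj

/-- The four unit directions of the square lattice. -/
def dirVec (d : ℕ) : Fin 4 → V d := ![(1, 0), (0, 1), (-1, 0), (0, -1)]

/-- A rigid embedding of a patch `K` of `T_d` into `T_{d'}`: an injective map
which, up to a fixed symmetry `g` of the square (an element of the dihedral
group acting on the four directions), preserves the local square-lattice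
structure — hence it is an injective graph homomorphism mapping plaquettes to
plaquettes. -/
def IsRigidEmbed (d d' : ℕ) (K : Set (V d)) (φ : V d → V d') : Prop :=
  Set.InjOn φ K ∧ ∃ g : Fin 4 → Fin 4, Function.Bijective g ∧
    (∀ j, g (j + 2) = g j + 2) ∧
    ∀ x ∈ K, ∀ j : Fin 4, x + dirVec d j ∈ K →
      φ (x + dirVec d j) = φ x + dirVec d' (g j)

/-- The embedding of a syndrome under an embedding map `φ`. -/
noncomputable def embedSynd (d d' : ℕ) (s : V d → ZMod 2) (φ : V d → V d') :
    V d' → ZMod 2 :=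
  fun c' => @ite _ (∃ c, s c = 1 ∧ φ c = c') (Classical.propDecidable _) 1 0


section ILinkHelpers

variable {d : ℕ}

lemma zmod_one_ne_zero (hd : 3 ≤ d) : (1 : ZMod d) ≠ 0 := by
  haveI : NeZero d := ⟨by omega⟩
  intro hh
  have h2 := (ZMod.natCast_eq_zero_iff 1 d).mp (by simpa using hh)
  have := Nat.le_of_dvd one_pos h2
  omega

lemma zmod_two_ne_zero (hd : 3 ≤ d) : (2 : ZMod d) ≠ 0 := by
  haveI : NeZero d := ⟨by omega⟩
  intro hh
  have h2 := (ZMod.natCast_eq_zero_iff 2 d).mp (by simpa using hh)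
  have := Nat.le_of_dvd two_pos h2
  omega

lemma pair_ne_zero_left {x y : ZMod d} (h : x ≠ 0) : (x, y) ≠ (0 : V d) :=
  fun hh => h (congrArg Prod.fst hh)

lemma pair_ne_zero_right {x y : ZMod d} (h : y ≠ 0) : (x, y) ≠ (0 : V d) :=
  fun hh => h (congrArg Prod.snd hh)

lemma ne_of_sub_ne_zero {v w : V d} (h : v - w ≠ 0) : v ≠ w :=
  fun hh => h (by rw [hh, sub_self])

lemma adj_of_diff {v w : V d} (h : v ≠ w)
    (hdiff : v - w = (1, 0) ∨ v - w = (-1, 0) ∨ v - w = (0, 1) ∨ v - w = (0, -1)) :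
    (Toric d).Adj v w := show v ≠ w ∧ _ from ⟨h, hdiff⟩

/-! ### cpl lemmas -/

lemma cpl_nil_left (y : List (V d)) : cpl ([] : List (V d)) y = 0 := by
  cases y <;> rfl

lemma cpl_nil_right (x : List (V d)) : cpl x ([] : List (V d)) = 0 := by
  cases x <;> rfl

lemma cpl_le_left : ∀ (x y : List (V d)), cpl x y ≤ x.length
  | [], y => by simp [cpl_nil_left]
  | x :: xs, [] => by simp [cpl_nil_right]
  | x :: xs, y :: ys => by
    by_cases h : x = y
    · simpa [cpl, h] using Nat.succ_le_succ (cpl_le_left xs ys)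
    · simp [cpl, h]

lemma cpl_le_right : ∀ (x y : List (V d)), cpl x y ≤ y.length
  | [], y => by simp [cpl_nil_left]
  | x :: xs, [] => by simp [cpl_nil_right]
  | x :: xs, y :: ys => by
    by_cases h : x = y
    · simpa [cpl, h] using Nat.succ_le_succ (cpl_le_right xs ys)
    · simp [cpl, h]

lemma cpl_append_append : ∀ (l r r' : List (V d)), cpl (l ++ r) (l ++ r') = l.length + cpl r r'
  | [], r, r' => by simp
  | a :: l, r, r' => by
    show cpl (a :: (l ++ r)) (a :: (l ++ r')) = (a :: l).length + cpl r r'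
    rw [cpl, if_pos rfl, cpl_append_append l r r', List.length_cons]
    omega

lemma cpl_self (l : List (V d)) : cpl l l = l.length := by
  have := cpl_append_append l [] []
  simpa [cpl_nil_left] using this

lemma cpl_self_append (l t : List (V d)) : cpl l (l ++ t) = l.length := by
  have := cpl_append_append l [] t
  simpa [cpl_nil_left] using this

lemma cpl_stable : ∀ (x y t : List (V d)), cpl x y < y.length → cpl x (y ++ t) = cpl x y
  | x, [], t, h => by simp [cpl_nil_right] at h
  | [], y :: ys, t, h => by simp [cpl_nil_left]
  | x :: xs, y :: ys, t, h => by
    by_cases hxy : x = y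
    · rw [cpl, if_pos hxy] at h
      show cpl (x :: xs) (y :: (ys ++ t)) = cpl (x :: xs) (y :: ys)
      rw [cpl, if_pos hxy, cpl, if_pos hxy, cpl_stable xs ys t (by
        rw [List.length_cons] at h; omega)]
    · show cpl (x :: xs) (y :: (ys ++ t)) = cpl (x :: xs) (y :: ys)
      rw [cpl, if_neg hxy, cpl, if_neg hxy]

lemma take_cpl : ∀ (x y : List (V d)), x.take (cpl x y) = y.take (cpl x y)
  | [], y => by simp [cpl_nil_left]
  | x :: xs, [] => by simp [cpl_nil_right]
  | x :: xs, y :: ys => by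
    by_cases h : x = y
    · subst h
      rw [cpl, if_pos rfl, List.take_succ_cons, List.take_succ_cons, take_cpl xs ys]
    · rw [cpl, if_neg h]
      simp

/-! ### walk extension lemmas -/

lemma app_getElem?_last (l : List (V d)) (w : V d) :
    (l ++ [w])[(l ++ [w]).length - 1]? = some w := by
  rw [List.length_append, List.length_singleton, Nat.add_sub_cancel,
    List.getElem?_append_right (le_refl _)]
  simp

lemma app_getElem?_pre (l : List (V d)) (w : V d) (h1 : 1 ≤ l.length) :
    (l ++ [w])[(l ++ [w]).length - 2]? = l[l.length - 1]? := by
  rw [List.length_append, List.length_singleton,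
    show l.length + 1 - 2 = l.length - 1 by omega]
  exact List.getElem?_append_left (by omega)

lemma wwr_step {l : List (V d)} {c p w : V d} (hl : IsWWR d l) (h2 : 2 ≤ l.length)
    (hc : l[l.length - 1]? = some c) (hp : l[l.length - 2]? = some p)
    (hadj : (Toric d).Adj c w) (hw : w ≠ p) : IsWWR d (l ++ [w]) := by
  obtain ⟨hch, hnr⟩ := hl
  constructor
  · show List.IsChain _ (l ++ [w]); rw [List.isChain_append]
    refine ⟨hch, List.isChain_singleton w, ?_⟩
    intro x hx y hy
    rw [List.getLast?_eq_getElem?, hc] at hx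
    simp only [Option.mem_def, Option.some.injEq, List.head?_cons] at hx hy
    rw [← hx, ← hy]
    exact hadj
  · intro j hj
    simp only [List.length_append, List.length_singleton] at hj
    by_cases hlt : j + 2 < l.length
    · rw [List.getElem?_append_left (by omega), List.getElem?_append_left hlt]
      exact hnr j hlt
    · have hj2 : j + 2 = l.length := by omega
      rw [List.getElem?_append_left (show j < l.length by omega),
        List.getElem?_append_right (show l.length ≤ j + 2 by omega),
        hj2, Nat.sub_self, show j = l.length - 2 by omega, hp]
      simp only [List.getElem?_cons_zero, ne_eq, Option.some.injEq]
      exact fun h => hw (id h.symm)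

def nxt (p c : V d) : V d := if c + (1, 0) = p then c + (0, 1) else c + (1, 0)

lemma nxt_ne (hd : 3 ≤ d) (p c : V d) : nxt p c ≠ p := by
  unfold nxt
  split
  · rename_i h
    rw [← h]
    intro hh
    have h2 := add_left_cancel hh
    rw [Prod.ext_iff] at h2
    exact zmod_one_ne_zero hd h2.1.symm
  · rename_i h
    exact h

lemma nxt_adj (hd : 3 ≤ d) (p c : V d) : (Toric d).Adj c (nxt p c) := by
  unfold nxt
  split
  · refine adj_of_diff (ne_of_sub_ne_zero ?_) (Or.inr (Or.inr (Or.inr (by refine Prod.ext ?_ ?_ <;> simp <;> ring_nf))))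
    rw [show c - (c + ((0 : ZMod d), (1 : ZMod d))) = (0, -1) by refine Prod.ext ?_ ?_ <;> simp <;> ring_nf]
    exact pair_ne_zero_right (neg_ne_zero.mpr (zmod_one_ne_zero hd))
  · refine adj_of_diff (ne_of_sub_ne_zero ?_) (Or.inr (Or.inl (by refine Prod.ext ?_ ?_ <;> simp <;> ring_nf)))
    rw [show c - (c + ((1 : ZMod d), (0 : ZMod d))) = (-1, 0) by refine Prod.ext ?_ ?_ <;> simp <;> ring_nf]
    exact pair_ne_zero_left (neg_ne_zero.mpr (zmod_one_ne_zero hd))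

def extW (p c : V d) : ℕ → List (V d)
  | 0 => []
  | n + 1 => nxt p c :: extW c (nxt p c) n

lemma extW_length (p c : V d) : ∀ n, (extW p c n).length = n
  | 0 => rfl
  | n + 1 => by simp [extW, extW_length c (nxt p c) n]

lemma wwr_extW (hd : 3 ≤ d) : ∀ (n : ℕ) (l : List (V d)) (p c : V d), IsWWR d l →
    2 ≤ l.length → l[l.length - 1]? = some c → l[l.length - 2]? = some p →
    IsWWR d (l ++ extW p c n)
  | 0, l, p, c, hl, h2, hc, hp => by simpa [extW] using hl
  | n + 1, l, p, c, hl, h2, hc, hp => by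
    have hstep : IsWWR d (l ++ [nxt p c]) :=
      wwr_step hl h2 hc hp (nxt_adj hd p c) (nxt_ne hd p c)
    have hlen : (l ++ [nxt p c]).length = l.length + 1 := by simp
    have hrec := wwr_extW hd n (l ++ [nxt p c]) c (nxt p c) hstep (by omega)
      (app_getElem?_last l (nxt p c))
      (by rw [app_getElem?_pre l (nxt p c) (by omega)]; exact hc)
    rw [show l ++ extW p c (n + 1) = (l ++ [nxt p c]) ++ extW c (nxt p c) n by
      simp [extW]]
    exact hrec

lemma startsQ_append {a b : V d} {l : List (V d)} (h : StartsQ d a b l)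
    (h2 : 2 ≤ l.length) (t : List (V d)) : StartsQ d a b (l ++ t) := by
  unfold StartsQ at h ⊢
  rw [List.take_append_of_le_length h2]
  exact h

lemma vcheck_append (l t : List (V d)) (h : t ≠ []) : vcheck (l ++ t) = vcheck t := by
  simp [vcheck, List.getLastD_eq_getLast?, List.getLast?_append_of_ne_nil (l₁ := l) h]

lemma getElem?_last_vcheck (l : List (V d)) (h : l ≠ []) :
    l[l.length - 1]? = some (vcheck l) := by
  rw [← List.getLast?_eq_getElem?, List.getLast?_eq_getLast h]
  simp [vcheck, List.getLastD_eq_getLast?, List.getLast?_eq_getLast h]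

lemma treeDist_self_append (l t : List (V d)) (h2 : 2 ≤ l.length) :
    treeDist l (l ++ t) = t.length := by
  rw [treeDist, if_pos (List.take_append_of_le_length h2).symm, cpl_self_append]
  rw [List.length_append]
  omega

/-- The plaquette facts bundle. -/
lemma plaq_facts (hd : 3 ≤ d) (c e1 : V d)
    (he : e1 = (1, 0) ∨ e1 = (0, 1) ∨ e1 = (-1, 0)) :
    (Toric d).Adj c (c + e1) ∧
    (Toric d).Adj (c + e1) (c + e1 + (e1.2, e1.1)) ∧
    (Toric d).Adj (c + e1 + (e1.2, e1.1)) (c + (e1.2, e1.1)) ∧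
    (Toric d).Adj (c + (e1.2, e1.1)) c ∧
    c + e1 + (e1.2, e1.1) ≠ c ∧ c + e1 ≠ c + (e1.2, e1.1) := by
  have h1 : (1 : ZMod d) ≠ 0 := zmod_one_ne_zero hd
  have hn1 : (-1 : ZMod d) ≠ 0 := neg_ne_zero.mpr h1
  rcases he with he | he | he <;> subst he
  · refine ⟨?_, ?_, ?_, ?_, ?_, ?_⟩
    · refine adj_of_diff (ne_of_sub_ne_zero ?_) (Or.inr (Or.inl (by refine Prod.ext ?_ ?_ <;> simp <;> ring_nf)))
      rw [show c - (c + ((1 : ZMod d), (0 : ZMod d))) = (-1, 0) by refine Prod.ext ?_ ?_ <;> simp <;> ring_nf]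
      exact pair_ne_zero_left hn1
    · refine adj_of_diff (ne_of_sub_ne_zero ?_) (Or.inr (Or.inr (Or.inr (by refine Prod.ext ?_ ?_ <;> simp <;> ring_nf))))
      rw [show c + ((1:ZMod d),(0:ZMod d)) - (c + (1,0) + (0,1)) = ((0:ZMod d), (-1:ZMod d)) by refine Prod.ext ?_ ?_ <;> simp <;> ring_nf]
      exact pair_ne_zero_right hn1
    · refine adj_of_diff (ne_of_sub_ne_zero ?_) (Or.inl (by refine Prod.ext ?_ ?_ <;> simp <;> ring_nf))
      rw [show c + ((1:ZMod d),(0:ZMod d)) + (0,1) - (c + (0,1)) = ((1:ZMod d), (0:ZMod d)) by refine Prod.ext ?_ ?_ <;> simp <;> ring_nf]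
      exact pair_ne_zero_left h1
    · refine adj_of_diff (ne_of_sub_ne_zero ?_) (Or.inr (Or.inr (Or.inl (by refine Prod.ext ?_ ?_ <;> simp <;> ring_nf))))
      rw [show c + ((0:ZMod d),(1:ZMod d)) - c = ((0:ZMod d), (1:ZMod d)) by refine Prod.ext ?_ ?_ <;> simp <;> ring_nf]
      exact pair_ne_zero_right h1
    · apply ne_of_sub_ne_zero
      rw [show c + ((1:ZMod d),(0:ZMod d)) + (0,1) - c = ((1:ZMod d), (1:ZMod d)) by refine Prod.ext ?_ ?_ <;> simp <;> ring_nf]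
      exact pair_ne_zero_left h1
    · apply ne_of_sub_ne_zero
      rw [show c + ((1:ZMod d),(0:ZMod d)) - (c + (0,1)) = ((1:ZMod d), (-1:ZMod d)) by refine Prod.ext ?_ ?_ <;> simp <;> ring_nf]
      exact pair_ne_zero_left h1
  · refine ⟨?_, ?_, ?_, ?_, ?_, ?_⟩
    · refine adj_of_diff (ne_of_sub_ne_zero ?_) (Or.inr (Or.inr (Or.inr (by refine Prod.ext ?_ ?_ <;> simp <;> ring_nf))))
      rw [show c - (c + ((0 : ZMod d), (1 : ZMod d))) = ((0:ZMod d), (-1:ZMod d)) by refine Prod.ext ?_ ?_ <;> simp <;> ring_nf]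
      exact pair_ne_zero_right hn1
    · refine adj_of_diff (ne_of_sub_ne_zero ?_) (Or.inr (Or.inl (by refine Prod.ext ?_ ?_ <;> simp <;> ring_nf)))
      rw [show c + ((0:ZMod d),(1:ZMod d)) - (c + (0,1) + (1,0)) = ((-1:ZMod d), (0:ZMod d)) by refine Prod.ext ?_ ?_ <;> simp <;> ring_nf]
      exact pair_ne_zero_left hn1
    · refine adj_of_diff (ne_of_sub_ne_zero ?_) (Or.inr (Or.inr (Or.inl (by refine Prod.ext ?_ ?_ <;> simp <;> ring_nf))))
      rw [show c + ((0:ZMod d),(1:ZMod d)) + (1,0) - (c + (1,0)) = ((0:ZMod d), (1:ZMod d)) by refine Prod.ext ?_ ?_ <;> simp <;> ring_nf]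
      exact pair_ne_zero_right h1
    · refine adj_of_diff (ne_of_sub_ne_zero ?_) (Or.inl (by refine Prod.ext ?_ ?_ <;> simp <;> ring_nf))
      rw [show c + ((1:ZMod d),(0:ZMod d)) - c = ((1:ZMod d), (0:ZMod d)) by refine Prod.ext ?_ ?_ <;> simp <;> ring_nf]
      exact pair_ne_zero_left h1
    · apply ne_of_sub_ne_zero
      rw [show c + ((0:ZMod d),(1:ZMod d)) + (1,0) - c = ((1:ZMod d), (1:ZMod d)) by refine Prod.ext ?_ ?_ <;> simp <;> ring_nf]
      exact pair_ne_zero_left h1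
    · apply ne_of_sub_ne_zero
      rw [show c + ((0:ZMod d),(1:ZMod d)) - (c + (1,0)) = ((-1:ZMod d), (1:ZMod d)) by refine Prod.ext ?_ ?_ <;> simp <;> ring_nf]
      exact pair_ne_zero_left hn1
  · refine ⟨?_, ?_, ?_, ?_, ?_, ?_⟩
    · refine adj_of_diff (ne_of_sub_ne_zero ?_) (Or.inl (by refine Prod.ext ?_ ?_ <;> simp <;> ring_nf))
      rw [show c - (c + ((-1 : ZMod d), (0 : ZMod d))) = ((1:ZMod d), (0:ZMod d)) by refine Prod.ext ?_ ?_ <;> simp <;> ring_nf]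
      exact pair_ne_zero_left h1
    · refine adj_of_diff (ne_of_sub_ne_zero ?_) (Or.inr (Or.inr (Or.inl (by refine Prod.ext ?_ ?_ <;> simp <;> ring_nf))))
      rw [show c + ((-1:ZMod d),(0:ZMod d)) - (c + (-1,0) + (0,-1)) = ((0:ZMod d), (1:ZMod d)) by refine Prod.ext ?_ ?_ <;> simp <;> ring_nf]
      exact pair_ne_zero_right h1
    · refine adj_of_diff (ne_of_sub_ne_zero ?_) (Or.inr (Or.inl (by refine Prod.ext ?_ ?_ <;> simp <;> ring_nf)))
      rw [show c + ((-1:ZMod d),(0:ZMod d)) + (0,-1) - (c + (0,-1)) = ((-1:ZMod d), (0:ZMod d)) by refine Prod.ext ?_ ?_ <;> simp <;> ring_nf]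
      exact pair_ne_zero_left hn1
    · refine adj_of_diff (ne_of_sub_ne_zero ?_) (Or.inr (Or.inr (Or.inr (by refine Prod.ext ?_ ?_ <;> simp <;> ring_nf))))
      rw [show c + ((0:ZMod d),(-1:ZMod d)) - c = ((0:ZMod d), (-1:ZMod d)) by refine Prod.ext ?_ ?_ <;> simp <;> ring_nf]
      exact pair_ne_zero_right hn1
    · apply ne_of_sub_ne_zero
      rw [show c + ((-1:ZMod d),(0:ZMod d)) + (0,-1) - c = ((-1:ZMod d), (-1:ZMod d)) by refine Prod.ext ?_ ?_ <;> simp <;> ring_nf]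
      exact pair_ne_zero_left hn1
    · apply ne_of_sub_ne_zero
      rw [show c + ((-1:ZMod d),(0:ZMod d)) - (c + (0,-1)) = ((-1:ZMod d), (1:ZMod d)) by refine Prod.ext ?_ ?_ <;> simp <;> ring_nf]
      exact pair_ne_zero_left hn1

end ILinkHelpers

/-- **Lemma (existence of an unlabeled I-link).** -/
theorem exists_unlabeled_Ilink (d : ℕ) (hd : 3 ≤ d) (s : V d → ZMod 2)
    (hsep : ∀ c c' : V d, s c = 1 → s c' = 1 → c ≠ c' → 4 ≤ (Toric d).dist c c')
    (a b : V d) (hab : (Toric d).Adj a b) (i : ℕ)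
    (C : List (V d) → ZMod 2) (hC : IsConfig d a b i s C)
    (L : Link d a b i s) (hmax : L.IsMaxLabeled C) (hprop : L.Proper)
    (hdeep : 5 ≤ distToBottom d a b i L.endB) :
    ∃ lv' : List (V d), IsTreeVertex d a b i lv' ∧ L.endB <+: lv' ∧
      lv'.length = L.endB.length + 4 ∧ vcheck lv' = vcheck L.endB ∧
      ∃ le : List (V d), le <+: lv' ∧ L.endB.length < le.length ∧ C le = 0 := by
  classical
  obtain ⟨hvA, hvB⟩ := hprop
  obtain ⟨hwB, hsB, hlenB2, hlenBi⟩ := id hvB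
  obtain ⟨hwA, hsA0, hlenA2, hlenAi⟩ := id hvA
  have hBne : L.endB ≠ [] := by
    intro h; rw [h] at hlenB2; simp at hlenB2
  set m := L.endB.length with hm
  have hi1 : 1 ≤ i := by omega
  set c := vcheck L.endB with hcdef
  have hc? : L.endB[m - 1]? = some c := getElem?_last_vcheck _ hBne
  have hm2' : m - 2 < L.endB.length := by omega
  set p := L.endB[m - 2]'hm2' with hpdef
  have hp? : L.endB[m - 2]? = some p := by
    rw [hpdef]; exact List.getElem?_eq_getElem hm2'
  -- Step 1: depth bound  m + 4 ≤ i + 1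
  have hbound : m + 4 ≤ i + 1 := by
    set t := extW p c (i + 2 - m) with ht
    have htlen : t.length = i + 2 - m := extW_length p c _
    have htne : t ≠ [] := by
      intro h; rw [h] at htlen; simp at htlen; omega
    have htw : IsWWR d (L.endB ++ t) := wwr_extW hd _ _ _ _ hwB hlenB2 hc? hp?
    have hlen : (L.endB ++ t).length = i + 2 := by
      rw [List.length_append, htlen]; omega
    have hdang : IsDangling d a b i (L.endB ++ t) := by
      refine ⟨⟨htw, startsQ_append hsB hlenB2 t, ?_, ?_, ?_⟩, hlen⟩
      · rw [hlen]; omega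
      · rw [hlen]
      · intro h2; exfalso; rw [hlen] at h2; omega
    have h5 : distToBottom d a b i L.endB ≤ treeDist L.endB (L.endB ++ t).dropLast + 1 := by
      unfold distToBottom
      exact Nat.sInf_le ⟨L.endB ++ t, hdang, rfl⟩
    rw [List.dropLast_append_of_ne_nil htne, treeDist_self_append _ _ hlenB2,
      List.length_dropLast, htlen] at h5
    omega
  -- Step 2: choice of the plaquette direction
  set f := L.endA.getD m 0 with hfdef
  obtain ⟨e1, he1, he1p, he1f⟩ : ∃ e1 : V d,
      (e1 = (1, 0) ∨ e1 = (0, 1) ∨ e1 = (-1, 0)) ∧ c + e1 ≠ p ∧ c + e1 ≠ f := by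
    have h1 : (1 : ZMod d) ≠ 0 := zmod_one_ne_zero hd
    have h2 : (2 : ZMod d) ≠ 0 := zmod_two_ne_zero hd
    have d12 : c + ((1 : ZMod d), (0 : ZMod d)) ≠ c + (0, 1) := by
      intro h
      have h' : (1 : ZMod d) = 0 := congrArg Prod.fst (add_left_cancel h)
      exact h1 h' 
    have d13 : c + ((1 : ZMod d), (0 : ZMod d)) ≠ c + (-1, 0) := by
      intro h
      have h' : (1 : ZMod d) = -1 := congrArg Prod.fst (add_left_cancel h)
      apply h2
      have h'' : (2 : ZMod d) = 1 - (-1) := by ring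
      rw [h'', ← h', sub_self]
    have d23 : c + ((0 : ZMod d), (1 : ZMod d)) ≠ c + (-1, 0) := by
      intro h
      have h' : (0 : ZMod d) = -1 := congrArg Prod.fst (add_left_cancel h)
      apply h1
      have h'' : (1 : ZMod d) = -(-1) := by ring
      rw [h'', ← h', neg_zero]
    by_cases ha1 : c + ((1:ZMod d), (0:ZMod d)) ≠ p ∧ c + ((1:ZMod d), (0:ZMod d)) ≠ f
    · exact ⟨(1, 0), Or.inl rfl, ha1.1, ha1.2⟩
    by_cases ha2 : c + ((0:ZMod d), (1:ZMod d)) ≠ p ∧ c + ((0:ZMod d), (1:ZMod d)) ≠ f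
    · exact ⟨(0, 1), Or.inr (Or.inl rfl), ha2.1, ha2.2⟩
    by_cases ha3 : c + ((-1:ZMod d), (0:ZMod d)) ≠ p ∧ c + ((-1:ZMod d), (0:ZMod d)) ≠ f
    · exact ⟨(-1, 0), Or.inr (Or.inr rfl), ha3.1, ha3.2⟩
    exfalso
    rw [not_and_or, not_not, not_not] at ha1 ha2 ha3
    rcases ha1 with h1' | h1' <;> rcases ha2 with h2' | h2' <;> rcases ha3 with h3' | h3'
    · exact d12 (h1'.trans h2'.symm)
    · exact d12 (h1'.trans h2'.symm)
    · exact d13 (h1'.trans h3'.symm)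
    · exact d23 (h2'.trans h3'.symm)
    · exact d23 (h2'.trans h3'.symm)
    · exact d13 (h1'.trans h3'.symm)
    · exact d12 (h1'.trans h2'.symm)
    · exact d12 (h1'.trans h2'.symm)
  obtain ⟨hadj1, hadj2, hadj3, hadj4, hne2c, hne12⟩ := plaq_facts hd c e1 he1
  set lv' := L.endB ++ [c + e1, c + e1 + (e1.2, e1.1), c + (e1.2, e1.1), c] with hlv'
  have hlvlen : lv'.length = m + 4 := by rw [hlv', List.length_append]; rfl
  -- the extension is a wwr
  have hw1 : IsWWR d (L.endB ++ [c + e1]) := wwr_step hwB hlenB2 hc? hp? hadj1 he1p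
  have hl1 : (L.endB ++ [c + e1]).length = m + 1 := by rw [List.length_append]; rfl
  have hw2 : IsWWR d ((L.endB ++ [c + e1]) ++ [c + e1 + (e1.2, e1.1)]) := by
    refine wwr_step hw1 (by omega) (app_getElem?_last _ _) ?_ hadj2 hne2c
    rw [app_getElem?_pre _ _ (by omega)]
    exact hc?
  have hl2 : ((L.endB ++ [c + e1]) ++ [c + e1 + (e1.2, e1.1)]).length = m + 2 := by
    rw [List.length_append, hl1]; rfl
  have hw3 : IsWWR d (((L.endB ++ [c + e1]) ++ [c + e1 + (e1.2, e1.1)]) ++ [c + (e1.2, e1.1)]) := by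
    refine wwr_step hw2 (by omega) (app_getElem?_last _ _) ?_ hadj3 (fun h => hne12 h.symm)
    rw [app_getElem?_pre _ _ (by omega)]
    exact app_getElem?_last _ _
  have hl3 : (((L.endB ++ [c + e1]) ++ [c + e1 + (e1.2, e1.1)]) ++ [c + (e1.2, e1.1)]).length = m + 3 := by
    rw [List.length_append, hl2]; rfl
  have hw4 : IsWWR d ((((L.endB ++ [c + e1]) ++ [c + e1 + (e1.2, e1.1)]) ++ [c + (e1.2, e1.1)]) ++ [c]) := by
    refine wwr_step hw3 (by omega) (app_getElem?_last _ _) ?_ hadj4 (fun h => hne2c h.symm)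
    rw [app_getElem?_pre _ _ (by omega)]
    exact app_getElem?_last _ _
  have hfour : lv' = (((L.endB ++ [c + e1]) ++ [c + e1 + (e1.2, e1.1)]) ++ [c + (e1.2, e1.1)]) ++ [c] := by
    rw [hlv']; simp
  have hv' : IsTreeVertex d a b i lv' := by
    refine ⟨?_, ?_, ?_, ?_⟩
    · rw [hfour]; exact hw4
    · rw [hlv']; exact startsQ_append hsB hlenB2 _
    · omega
    · omega
  have hvch : vcheck lv' = c := by
    rw [hlv', vcheck_append _ _ (by simp)]
    rfl
  have hBpre : L.endB <+: lv' := ⟨_, hlv'.symm⟩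
  have htake2 : lv'.take 2 = L.endB.take 2 := by
    rw [hlv']; exact List.take_append_of_le_length hlenB2
  refine ⟨lv', hv', hBpre, hlvlen, hvch, ?_⟩
  by_contra hcon
  push_neg at hcon
  have hzm : ∀ x : ZMod 2, x ≠ 0 → x = 1 := by decide
  have hlab1 : ∀ le : List (V d), le <+: lv' → m < le.length → C le = 1 :=
    fun le h1 h2 => hzm _ (hcon le h1 h2)
  -- the common-prefix length is unchanged
  have hcplB : cpl L.endA L.endB ≤ m := cpl_le_right _ _
  have hcpl : cpl L.endA lv' = cpl L.endA L.endB := by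
    rcases lt_or_eq_of_le hcplB with hlt | heq
    · rw [hlv']; exact cpl_stable _ _ _ (by omega)
    · have htk := take_cpl L.endA L.endB
      rw [heq] at htk
      have htkB : L.endB.take m = L.endB := by rw [hm]; exact List.take_length
      have hpreBA : L.endB <+: L.endA := by
        rw [List.prefix_iff_eq_take, ← hm]
        exact (htk.trans htkB).symm
      obtain ⟨rA, hrA⟩ := hpreBA
      have hrAne : rA ≠ [] := by
        intro h; rw [h, List.append_nil] at hrA
        exact L.hne hrA.symm
      obtain ⟨w0, rA', hw0⟩ := List.exists_cons_of_ne_nil hrAne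
      have hfw : f = w0 := by
        rw [hfdef, ← hrA, hw0, List.getD_eq_getElem?_getD,
          List.getElem?_append_right (by omega)]
        rw [show m - L.endB.length = 0 by omega]
        simp
      rw [heq, ← hrA, hw0, hlv', cpl_append_append, cpl,
        if_neg (fun hh => he1f (hfw.trans hh).symm)]
      omega
  have hA'ne : lv' ≠ L.endA := by
    intro h
    have h2 : cpl L.endA lv' = lv'.length := by rw [← h, cpl_self]
    rw [hcpl, hlvlen] at h2
    omega
  -- stripD identities
  have hstA : stripD i L.endA = L.endA := by
    unfold stripD; rw [if_neg (by omega)]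
  have hstB : stripD i L.endB = L.endB := by
    unfold stripD; rw [if_neg (by omega)]
  have hstL : stripD i lv' = lv' := by
    unfold stripD; rw [if_neg (by omega)]
  -- path transfer lemmas
  have hsub0 : ∀ le, OnPathVV L.endA L.endB le → OnPathVV L.endA lv' le := by
    intro le hon
    rw [OnPathVV] at hon ⊢
    by_cases ht2 : L.endA.take 2 = L.endB.take 2
    · rw [if_pos ht2] at hon
      rw [if_pos (by rw [htake2]; exact ht2)]
      obtain ⟨hpre, hlen⟩ := hon
      refine ⟨?_, by rw [hcpl]; exact hlen⟩
      rcases hpre with h | h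
      · exact Or.inl h
      · exact Or.inr (h.trans hBpre)
    · rw [if_neg ht2] at hon
      rw [if_neg (by rw [htake2]; exact ht2)]
      rcases hon with ⟨hpre, h3⟩ | h2
      · refine Or.inl ⟨?_, h3⟩
        rcases hpre with h | h
        · exact Or.inl h
        · exact Or.inr (h.trans hBpre)
      · exact Or.inr h2
  have hlab0 : ∀ le, IsTreeEdge d a b i le → OnPathVV L.endA lv' le → C le = 1 := by
    intro le hte hon
    rw [OnPathVV] at hon
    by_cases ht2 : L.endA.take 2 = L.endB.take 2
    · rw [if_pos (by rw [htake2]; exact ht2)] at hon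
      obtain ⟨hpre, hlen⟩ := hon
      rcases hpre with h | h
      · refine hmax.1 le hte (Or.inl ?_)
        rw [hstA, hstB, OnPathVV, if_pos ht2]
        exact ⟨Or.inl h, by rw [← hcpl]; exact hlen⟩
      · by_cases hml : le.length ≤ m
        · have hpB : le <+: L.endB :=
            List.prefix_of_prefix_length_le h hBpre (by omega)
          refine hmax.1 le hte (Or.inl ?_)
          rw [hstA, hstB, OnPathVV, if_pos ht2]
          exact ⟨Or.inr hpB, by rw [← hcpl]; exact hlen⟩
        · exact hlab1 le h (by omega)
    · rw [if_neg (by rw [htake2]; exact ht2)] at hon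
      rcases hon with ⟨hpre, h3⟩ | h2
      · rcases hpre with h | h
        · refine hmax.1 le hte (Or.inl ?_)
          rw [hstA, hstB, OnPathVV, if_neg ht2]
          exact Or.inl ⟨Or.inl h, h3⟩
        · by_cases hml : le.length ≤ m
          · have hpB : le <+: L.endB :=
              List.prefix_of_prefix_length_le h hBpre (by omega)
            refine hmax.1 le hte (Or.inl ?_)
            rw [hstA, hstB, OnPathVV, if_neg ht2]
            exact Or.inl ⟨Or.inr hpB, h3⟩
          · exact hlab1 le h (by omega)
      · refine hmax.1 le hte (Or.inl ?_)
        rw [hstA, hstB, OnPathVV, if_neg ht2]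
        exact Or.inr h2
  -- the extended link
  have hsu : s (vcheck lv') = 1 := by
    rw [hvch, hcdef]; exact L.hBu hvB
  set L' : Link d a b i s :=
    ⟨L.endA, lv', Or.inl hvA, Or.inl hv', fun _ => L.hAu hvA, fun _ => hsu,
      fun h => hA'ne h.symm⟩ with hL'def
  have hpA : L'.endA = L.endA := rfl
  have hpB : L'.endB = lv' := rfl
  have honL' : ∀ le, L'.on le ↔ OnPathVV L.endA lv' le := by
    intro le
    unfold Link.on
    rw [hpA, hpB, hstA, hstL]
    constructor
    · rintro (h | ⟨hl, _⟩ | ⟨hl, _⟩)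
      · exact h
      · exact absurd hl (by omega)
      · exact absurd hl (by omega)
    · exact fun h => Or.inl h
  have hlab' : L'.IsLabeled C := fun le hte hon => hlab0 le hte ((honL' le).mp hon)
  have hsub' : ∀ le, L.on le → L'.on le := by
    intro le hon
    unfold Link.on at hon
    rcases hon with h | ⟨hl, _⟩ | ⟨hl, _⟩
    · rw [hstA, hstB] at h
      exact (honL' le).mpr (hsub0 le h)
    · exact absurd hl (by omega)
    · exact absurd hl (by omega)
  have hfin := hmax.2 L' hlab' hsub'
  have hlenL : L.len = treeDist L.endA L.endB := by
    unfold Link.len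
    rw [hstA, hstB, if_neg (by omega), if_neg (by omega)]
    omega
  have hlenL' : L'.len = treeDist L.endA lv' := by
    unfold Link.len
    rw [hpA, hpB, hstA, hstL, if_neg (by omega), if_neg (by omega)]
    omega
  have hTd : treeDist L.endA lv' = treeDist L.endA L.endB + 4 := by
    rw [treeDist, treeDist]
    by_cases ht2 : L.endA.take 2 = L.endB.take 2
    · rw [if_pos (by rw [htake2]; exact ht2), if_pos ht2, hcpl]
      have h1 := cpl_le_left L.endA L.endB
      omega
    · rw [if_neg (by rw [htake2]; exact ht2), if_neg ht2]
      omega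
  rw [hlenL', hlenL, hTd] at hfin
  omega

end ToricMS
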